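/- The cumulatively merged partition 𝒞 = 𝒞(G,r,α) satisfies: (i) any vertex x with r(x) < 1 is isolated, i.e. {x} ∈ 𝒞; (ii) every cluster C ∈ 𝒞 satisfies |C| ≤ max(r(C),1); (iii) for every cluster C ∈ 𝒞, r(C) = +∞ if and only if |C| = +∞; (iv) 𝒞 contains at most one infinite cluster. -/

import Mathlib

/-!
In a connected graph, distinct clusters of any partition are at graph distance at least `1`.
Hence if `r x < 1`, the partition `{{x}, V \ {x}}` is admissible, because
`min(r(C), r(C'))^α ≤ r x < 1` for `α ≥ 1`; so `x` is isolated, and every vertex of a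
non-singleton cluster has weight at least `1`, which bounds the cardinality of such a cluster
by its weight. Two sets of infinite weight can never be distinct clusters of an admissible
partition, as `∞^α = ∞`; hence no admissible partition separates two CMP clusters of infinite
weight, and they coincide.
-/

open scoped ENNReal NNReal
open MeasureTheory

namespace CMPPaper

variable {V : Type*}

/-- Graph distance between two subsets of vertices, valued in `ℝ≥0∞`
(`⊤` when one of the sets is empty). -/
noncomputable def setDist (G : SimpleGraph V) (A B : Set V) : ℝ≥0∞ :=
  ⨅ (x : A) (y : B), (G.dist x.1 y.1 : ℝ≥0∞)

/-- Total weight `r(A) = Σ_{x ∈ A} r(x) ∈ [0,∞]` of a set of vertices. -/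
noncomputable def wt (r : V → ℝ≥0) (A : Set V) : ℝ≥0∞ :=
  ∑' x : A, (r x.1 : ℝ≥0∞)

/-- A partition (encoded as a setoid) of the vertex set is `(r,α)`-admissible if any two
distinct clusters `C ≠ C'` satisfy `d(C,C') > min(r(C), r(C'))^α`. -/
def Admissible (G : SimpleGraph V) (r : V → ℝ≥0) (α : ℝ) (s : Setoid V) : Prop :=
  ∀ C ∈ s.classes, ∀ C' ∈ s.classes, C ≠ C' →
    (min (wt r C) (wt r C')) ^ α < setDist G C C'

/-- The cumulatively merged partition: the finest `(r,α)`-admissible partition, i.e. the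
intersection (infimum as setoids) of all `(r,α)`-admissible partitions. -/
noncomputable def CMP (G : SimpleGraph V) (r : V → ℝ≥0) (α : ℝ) : Setoid V :=
  sInf {s : Setoid V | Admissible G r α s}

/-- The cluster of the CMP containing `x`. -/
def cluster (G : SimpleGraph V) (r : V → ℝ≥0) (α : ℝ) (x : V) : Set V :=
  {y | (CMP G r α) x y}

/-- The ball `B(A, l) = {z : d(z,A) ≤ l}` around a set of vertices. -/
def ballSet (G : SimpleGraph V) (A : Set V) (l : ℝ≥0∞) : Set V :=
  {z | ∃ a ∈ A, (G.dist z a : ℝ≥0∞) ≤ l}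

/-- A subset `H` of the vertices is stable if every cluster `C` of the CMP of the induced
subgraph on `H` (with the restricted weights) satisfies `B(C, r(C)^α) ⊆ H`. -/
def IsStable (G : SimpleGraph V) (r : V → ℝ≥0) (α : ℝ) (H : Set V) : Prop :=
  ∀ C ∈ (CMP (G.induce H) (fun x : H => r x) α).classes,
    ballSet G (Subtype.val '' C) ((wt (fun x : H => r x) C) ^ α) ⊆ H

/-- The stabiliser of `W`: the smallest stable set containing `W`, i.e. the intersection of
all stable sets containing `W`. -/
def stabiliser (G : SimpleGraph V) (r : V → ℝ≥0) (α : ℝ) (W : Set V) : Set V :=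
  ⋂₀ {H : Set V | IsStable G r α H ∧ W ⊆ H}

open Classical in
/-- The merging operator `M_{x,y}`: if the clusters of `x` and `y` are distinct and
`d(x,y) ≤ min(r(𝒞_x), r(𝒞_y))^α`, merge them (take the smallest coarsening of `s`
relating `x` and `y`); otherwise leave the partition unchanged. -/
noncomputable def mergeOp (G : SimpleGraph V) (r : V → ℝ≥0) (α : ℝ) (x y : V)
    (s : Setoid V) : Setoid V :=
  if ¬ s x y ∧ (G.dist x y : ℝ≥0∞) ≤ (min (wt r {u | s x u}) (wt r {u | s y u})) ^ α then
    sInf {t : Setoid V | s ≤ t ∧ t x y}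
  else s

/-- The relation `C ↦ C'` (`C'` descends from `C`) on clusters of the CMP. -/
def Descends (G : SimpleGraph V) (r : V → ℝ≥0) (α : ℝ) (C C' : Set V) : Prop :=
  C ∈ (CMP G r α).classes ∧ C' ∈ (CMP G r α).classes ∧ C ≠ C' ∧
    setDist G C C' ≤ (wt r C) ^ α

/-- Integer part of an extended nonnegative real, valued in `ℕ∞`. -/
noncomputable def efloor (x : ℝ≥0∞) : ℕ∞ :=
  if x = ⊤ then ⊤ else (⌊x.toReal⌋₊ : ℕ∞)

/-- The bound `max(w log₂ w / 2, 0)` (for `α = 1`), resp. `w^α/(2^α-2)` (for `α ≠ 1`),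
on the diameter of a cluster of total weight `w`. -/
noncomputable def diamBound (α : ℝ) (w : ℝ≥0∞) : ℝ≥0∞ :=
  if α = 1 then
    (if w = ⊤ then ⊤ else ENNReal.ofReal (max (w.toReal * Real.logb 2 w.toReal / 2) 0))
  else w ^ α / ((2 : ℝ≥0∞) ^ α - 2)

/-- The relation `C →η C'` on clusters of the CMP:  `d(C,C') ≤ η·r(C)^α`. -/
def EtaDesc (G : SimpleGraph V) (r : V → ℝ≥0) (α η : ℝ) (C C' : Set V) : Prop :=
  C ∈ (CMP G r α).classes ∧ C' ∈ (CMP G r α).classes ∧ C ≠ C' ∧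
    setDist G C C' ≤ ENNReal.ofReal η * (wt r C) ^ α

/-- The `η`-stabiliser of a vertex `x`: the union of `𝒞_x` together with all clusters
reachable from `𝒞_x` by a finite oriented path for the relation `→η`. -/
def etaStab (G : SimpleGraph V) (r : V → ℝ≥0) (α η : ℝ) (x : V) : Set V :=
  ⋃₀ {C' | Relation.ReflTransGen (EtaDesc G r α η) (cluster G r α x) C'}

/-- The path graph on `ℕ`: `m` and `m+1` are adjacent. -/
def pathGraphN : SimpleGraph ℕ := SimpleGraph.fromRel (fun m n => n = m + 1)

/-- The two-sided path graph on `ℤ`: `k` and `k+1` are adjacent. -/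
def pathGraphZ : SimpleGraph ℤ := SimpleGraph.fromRel (fun a b => b = a + 1)

/-- The hypercubic lattice `ℤ^d`: `x` and `y` are adjacent iff `‖x-y‖₁ = 1`. -/
def latticeGraph (d : ℕ) : SimpleGraph (Fin d → ℤ) :=
  SimpleGraph.fromRel (fun x y => (∑ i, |x i - y i|) = 1)

/-- The CMP of the weighted graph `(G, r)` with expansion exponent `α` has an
infinite cluster. -/
def HasInfiniteCluster (G : SimpleGraph V) (r : V → ℝ≥0) (α : ℝ) : Prop :=
  ∃ C ∈ (CMP G r α).classes, C.Infinite

/-- `w` is an i.i.d. family of Bernoulli(`p`) weights indexed by `V`, under the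
probability measure `μ`. -/
def IsBernoulliField {Ω : Type*} [MeasurableSpace Ω] (μ : Measure Ω)
    (p : ℝ) (w : Ω → V → ℝ≥0) : Prop :=
  (∀ x : V, Measurable fun ω => w ω x) ∧
  (∀ ω x, w ω x = 0 ∨ w ω x = 1) ∧
  (∀ x : V, μ {ω | w ω x = 1} = ENNReal.ofReal p) ∧
  ProbabilityTheory.iIndepFun (fun x ω => w ω x) μ

/-- `w` is an i.i.d. family of weights indexed by `V`, each with law `ν`, under the
probability measure `μ`. -/
def IsIIDField {Ω : Type*} [MeasurableSpace Ω] (μ : Measure Ω)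
    (ν : Measure ℝ≥0) (w : Ω → V → ℝ≥0) : Prop :=
  (∀ x : V, Measurable fun ω => w ω x) ∧
  (∀ x : V, μ.map (fun ω => w ω x) = ν) ∧
  ProbabilityTheory.iIndepFun (fun x ω => w ω x) μ


section Weights

variable {r : V → ℝ≥0}

lemma wt_mono {A B : Set V} (h : A ⊆ B) : wt r A ≤ wt r B :=
  ENNReal.tsum_mono_subtype (fun v => (r v : ℝ≥0∞)) h

lemma wt_singleton (x : V) : wt r {x} = r x :=
  tsum_singleton x fun v => (r v : ℝ≥0∞)

lemma wt_ne_top_of_finite {A : Set V} (hA : A.Finite) : wt r A ≠ ⊤ :=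
  have := hA.to_subtype
  ENNReal.tsum_coe_ne_top_iff_summable.2 .of_finite

lemma encard_le_wt {A : Set V} (h : ∀ x ∈ A, 1 ≤ r x) : (A.encard : ℝ≥0∞) ≤ wt r A := by
  rw [← ENNReal.tsum_set_one]
  exact ENNReal.tsum_le_tsum fun x => by exact_mod_cast h x x.2

end Weights

section Admissible

variable {G : SimpleGraph V} {r : V → ℝ≥0} {α : ℝ}

lemma one_le_setDist_of_mem_classes (hconn : G.Connected) {s : Setoid V} {C C' : Set V}
    (hC : C ∈ s.classes) (hC' : C' ∈ s.classes) (hne : C ≠ C') : 1 ≤ setDist G C C' := by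
  refine le_iInf fun a => le_iInf fun b => ?_
  have hab : a.1 ≠ b.1 := fun h => hne (Setoid.eq_of_mem_classes hC a.2 hC' (h ▸ b.2))
  exact_mod_cast hconn.pos_dist_of_ne hab

lemma admissible_of_min_wt_lt_one (hconn : G.Connected) (hα : 1 ≤ α) {s : Setoid V}
    (h : ∀ C ∈ s.classes, ∀ C' ∈ s.classes, C ≠ C' → min (wt r C) (wt r C') < 1) :
    Admissible G r α s := fun C hC C' hC' hne =>
  calc min (wt r C) (wt r C') ^ α ≤ min (wt r C) (wt r C') :=
        ENNReal.rpow_le_self_of_le_one (h C hC C' hC' hne).le hα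
    _ < 1 := h C hC C' hC' hne
    _ ≤ setDist G C C' := one_le_setDist_of_mem_classes hconn hC hC' hne

lemma Admissible.eq_of_wt_eq_top {s : Setoid V} (hs : Admissible G r α s) (hα : 0 < α)
    {C C' : Set V} (hC : C ∈ s.classes) (hC' : C' ∈ s.classes)
    (hwt : wt r C = ⊤) (hwt' : wt r C' = ⊤) : C = C' := by
  by_contra hne
  have := hs C hC C' hC' hne
  rw [hwt, hwt', min_self, ENNReal.top_rpow_of_pos hα] at this
  exact not_top_lt this

lemma CMP_le {s : Setoid V} (hs : Admissible G r α s) : CMP G r α ≤ s :=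
  sInf_le hs

lemma eq_cluster_of_mem_classes {C : Set V} (hC : C ∈ (CMP G r α).classes) {x : V}
    (hx : x ∈ C) : C = cluster G r α x := by
  rw [Setoid.eq_of_mem_classes hC hx ((CMP G r α).mem_classes x) ((CMP G r α).refl' x)]
  ext y
  exact ⟨(CMP G r α).symm', (CMP G r α).symm'⟩

end Admissible

section Properties

variable {G : SimpleGraph V} {r : V → ℝ≥0} {α : ℝ}

/-- `Setoid.ker (· = x)` is the partition `{{x}, V \ {x}}`. -/
lemma admissible_isolate (hconn : G.Connected) (hα : 1 ≤ α) {x : V} (hx : r x < 1) :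
    Admissible G r α (Setoid.ker (· = x)) := by
  set s : Setoid V := Setoid.ker (· = x)
  have wt_class_x : wt r {z | s z x} < 1 := by
    have class_x : {z | s z x} = {x} := by ext z; simp [s, Setoid.ker_def]
    rw [class_x, wt_singleton]
    exact_mod_cast hx
  refine admissible_of_min_wt_lt_one hconn hα ?_
  rintro _ ⟨c, rfl⟩ _ ⟨c', rfl⟩ hne
  have hcc' : ¬ s c c' := fun h =>
    hne (Set.ext fun z => ⟨fun hz => s.trans' hz h, fun hz => s.trans' hz (s.symm' h)⟩)
  have : c = x ∨ c' = x := by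
    simp only [s, Setoid.ker_def] at hcc'
    tauto
  rcases this with rfl | rfl
  · exact min_lt_of_left_lt wt_class_x
  · exact min_lt_of_right_lt wt_class_x

lemma cluster_eq_singleton (hconn : G.Connected) (hα : 1 ≤ α) {x : V} (hx : r x < 1) :
    cluster G r α x = {x} :=
  Set.eq_singleton_iff_unique_mem.2 ⟨(CMP G r α).refl' x, fun y hy => by
    simpa [Setoid.ker_def] using (CMP_le (admissible_isolate hconn hα hx) hy).symm⟩

lemma one_le_of_mem_nontrivial (hconn : G.Connected) (hα : 1 ≤ α) {C : Set V}
    (hC : C ∈ (CMP G r α).classes) (hnt : C.Nontrivial) {x : V} (hx : x ∈ C) : 1 ≤ r x := by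
  by_contra! hlt
  rw [eq_cluster_of_mem_classes hC hx, cluster_eq_singleton hconn hα hlt] at hnt
  exact Set.not_nontrivial_singleton hnt

lemma encard_le_max_wt_one (hconn : G.Connected) (hα : 1 ≤ α) {C : Set V}
    (hC : C ∈ (CMP G r α).classes) : (C.encard : ℝ≥0∞) ≤ max (wt r C) 1 := by
  rcases C.subsingleton_or_nontrivial with hsub | hnt
  · exact le_max_of_le_right (by exact_mod_cast Set.encard_le_one_iff_subsingleton.2 hsub)
  · exact le_max_of_le_left (encard_le_wt fun _ => one_le_of_mem_nontrivial hconn hα hC hnt)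

lemma wt_eq_top_iff_infinite (hconn : G.Connected) (hα : 1 ≤ α) {C : Set V}
    (hC : C ∈ (CMP G r α).classes) : wt r C = ⊤ ↔ C.Infinite := by
  refine ⟨fun htop hfin => wt_ne_top_of_finite hfin htop, fun hinf => ?_⟩
  have := encard_le_wt fun _ => one_le_of_mem_nontrivial hconn hα hC hinf.nontrivial
  rwa [hinf.encard_eq, ENat.toENNReal_top, top_le_iff] at this

lemma eq_of_wt_eq_top (hα : 0 < α) {C C' : Set V} (hC : C ∈ (CMP G r α).classes)
    (hC' : C' ∈ (CMP G r α).classes) (hwt : wt r C = ⊤) (hwt' : wt r C' = ⊤) : C = C' := by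
  obtain ⟨x, rfl⟩ := hC
  obtain ⟨y, rfl⟩ := hC'
  suffices hxy : CMP G r α x y from
    Set.ext fun z => ⟨fun hz => (CMP G r α).trans' hz hxy,
      fun hz => (CMP G r α).trans' hz ((CMP G r α).symm' hxy)⟩
  refine Setoid.sInf_iff.2 fun s (hs : Admissible G r α s) => ?_
  have wt_class {v : V} (h : wt r {z | CMP G r α z v} = ⊤) : wt r {z | s z v} = ⊤ :=
    top_le_iff.1 (h ▸ wt_mono fun z hz => CMP_le hs hz)
  have classes_eq :=
    hs.eq_of_wt_eq_top hα (s.mem_classes x) (s.mem_classes y) (wt_class hwt) (wt_class hwt')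
  exact (classes_eq ▸ s.refl' x : x ∈ {z | s z y})

end Properties

theorem CMP_basic_properties_general
    {V : Type*} (G : SimpleGraph V) (hconn : G.Connected)
    (r : V → ℝ≥0) (α : ℝ) (hα : 1 ≤ α) :
    (∀ x : V, r x < 1 → cluster G r α x = {x}) ∧
    (∀ C ∈ (CMP G r α).classes, (C.encard : ℝ≥0∞) ≤ max (wt r C) 1) ∧
    (∀ C ∈ (CMP G r α).classes, (wt r C = ⊤ ↔ C.Infinite)) ∧
    (∀ C ∈ (CMP G r α).classes, ∀ C' ∈ (CMP G r α).classes,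
      C.Infinite → C'.Infinite → C = C') :=
  ⟨fun _ => cluster_eq_singleton hconn hα,
    fun _ => encard_le_max_wt_one hconn hα,
    fun _ => wt_eq_top_iff_infinite hconn hα,
    fun _ hC _ hC' hinf hinf' => eq_of_wt_eq_top (by linarith) hC hC'
      ((wt_eq_top_iff_infinite hconn hα hC).2 hinf)
      ((wt_eq_top_iff_infinite hconn hα hC').2 hinf')⟩

/-- Basic properties of the CMP: (i) any vertex of weight `< 1` is isolated;
(ii) `|C| ≤ max(r(C), 1)` for every cluster; (iii) a cluster has infinite weight iff it is
infinite; (iv) there is at most one infinite cluster. -/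
theorem CMP_basic_properties
    {V : Type*} (G : SimpleGraph V) (hconn : G.Connected)
    (hlf : ∀ v : V, (G.neighborSet v).Finite)
    (r : V → ℝ≥0) (α : ℝ) (hα : 1 ≤ α) :
    (∀ x : V, r x < 1 → cluster G r α x = {x}) ∧
    (∀ C ∈ (CMP G r α).classes, (C.encard : ℝ≥0∞) ≤ max (wt r C) 1) ∧
    (∀ C ∈ (CMP G r α).classes, (wt r C = ⊤ ↔ C.Infinite)) ∧
    (∀ C ∈ (CMP G r α).classes, ∀ C' ∈ (CMP G r α).classes,
      C.Infinite → C'.Infinite → C = C') :=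
  CMP_basic_properties_general G hconn r α hα

end CMPPaper
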